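/- On m = 3 qubits (N = 8), let E_1 = E(010,010), E_2 = E(011,001), E_3 = E(001,111), E_4 = E(101,011), and W = (E_1 + E_2 + E_3 + E_4)/2. Then W is unitary, W is not a Clifford matrix, and W does not belong to any level C^(k) of the Clifford hierarchy; in particular the union of all levels of the Clifford hierarchy is a proper subset of the unitary group U(8). -/

import Mathlib

open Matrix
open scoped Classical

noncomputable section

abbrev V (m : ℕ) := Fin m → ZMod 2

/-- Integer dot product of two binary vectors (using {0,1} representatives). -/
def dotN {m : ℕ} (a b : V m) : ℕ := ∑ i, (a i).val * (b i).val

/-- The matrix `D(a,b)` with `D(a,b)|v⟩ = (−1)^{b·v}|v⊕a⟩`. -/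
def DM {m : ℕ} (a b : V m) : Matrix (V m) (V m) ℂ :=
  Matrix.of fun u v => if u = v + a then (-1 : ℂ) ^ dotN b v else 0

/-- The Hermitian Pauli `E(a,b) = i^{a·b mod 4} D(a,b)`, for `c = (a,b) ∈ F_2^{2m}`. -/
def EM {m : ℕ} (c : V m × V m) : Matrix (V m) (V m) ℂ :=
  Complex.I ^ dotN c.1 c.2 • DM c.1 c.2

/-- The Heisenberg–Weyl group `HW_N = {i^k D(a,b)}`, as a set of matrices. -/
def HW (m : ℕ) : Set (Matrix (V m) (V m) ℂ) :=
  {M | ∃ (k : Fin 4) (a b : V m), M = Complex.I ^ (k : ℕ) • DM a b}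

/-- A Clifford matrix: a unitary normalizing the Heisenberg–Weyl group. -/
def IsClifford {m : ℕ} (G : Matrix (V m) (V m) ℂ) : Prop :=
  G ∈ Matrix.unitaryGroup (V m) ℂ ∧ ∀ W ∈ HW m, G * W * Gᴴ ∈ HW m

/-- The (Pauli/Weyl) support of a matrix, identified with vectors in `F_2^{2m}`. -/
def supp {m : ℕ} (M : Matrix (V m) (V m) ℂ) : Set (V m × V m) :=
  {c | Matrix.trace ((EM c)ᴴ * M) ≠ 0}

/-- The symplectic inner product on `F_2^{2m}`. -/
def sympl {m : ℕ} (u v : V m × V m) : ZMod 2 :=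
  ∑ i, (u.1 i * v.2 i + u.2 i * v.1 i)

/-- The Clifford hierarchy; `CH m k` is the `(k+1)`-st level `C^(k+1)`, so
`CH m 0 = HW_N = C^(1)` and `C^(3) = CH m 2`. -/
def CH (m : ℕ) : ℕ → Set (Matrix (V m) (V m) ℂ)
  | 0 => HW m
  | k + 1 => {U | U ∈ Matrix.unitaryGroup (V m) ℂ ∧ ∀ W ∈ HW m, U * W * Uᴴ ∈ CH m k}
/-!
`W = S/2`, where `S = E₁ + E₂ + E₃ + E₄` is a sum of four pairwise anticommuting Hermitian
involutions; hence `S² = 4`, so `W` is a Hermitian involution, and `S E₁ + E₁ S = 2` gives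
`W E₁ W = W - E₁`. The Pauli `E(q)`, `q = (110,100)`, anticommutes with `E₁` and commutes with
`E₂, E₃, E₄`, so also `E(q) W E(q) = W - E₁`. Thus `W E₁ W† = E(q) W E(q)†`: if `W ∈ C^(k+1)`,
then `E(q) W E(q)† ∈ C^(k)` and so `W ∈ C^(k)`. Descending, `W ∈ HW_N`, which fails because the
first column of `W` has four nonzero entries.
-/

open Finset

section AnticommutingFamily

variable {R : Type*} [Ring R] {ι : Type*} {A : ι → R} {s : Finset ι}

lemma mul_sum_eq_neg_sum_mul {x : R} (h : ∀ j ∈ s, x * A j = -(A j * x)) :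
    x * ∑ j ∈ s, A j = -((∑ j ∈ s, A j) * x) := by
  rw [mul_sum, sum_mul, ← sum_neg_distrib]
  exact sum_congr rfl h

lemma mul_sum_mul_eq_sub_of_anticommute {Q : R} (hQ : Q * Q = 1) {i : ι} (hi : i ∈ s)
    (hQi : Q * A i = -(A i * Q)) (hQj : ∀ j ∈ s, j ≠ i → Commute Q (A j)) :
    Q * (∑ j ∈ s, A j) * Q = ∑ j ∈ s, A j - 2 * A i := by
  have hS : Commute Q (∑ j ∈ s.erase i, A j) :=
    Commute.sum_right _ _ _ fun j hj => hQj j (mem_of_mem_erase hj) (ne_of_mem_erase hj)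
  rw [← add_sum_erase s A hi, mul_add, add_mul, hQi, hS.eq, neg_mul, mul_assoc, mul_assoc, hQ,
    mul_one, mul_one, two_mul]
  abel

variable (hsq : ∀ i ∈ s, A i * A i = 1)
  (hanti : ∀ i ∈ s, ∀ j ∈ s, i ≠ j → A i * A j = -(A j * A i))
include hsq hanti

lemma sum_mul_self_of_anticommute : (∑ i ∈ s, A i) * ∑ i ∈ s, A i = s.card := by
  induction s using Finset.induction_on with
  | empty => simp
  | insert a s ha ih =>
    have hS : A a * ∑ j ∈ s, A j = -((∑ j ∈ s, A j) * A a) :=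
      mul_sum_eq_neg_sum_mul fun j hj =>
        hanti a (mem_insert_self a s) j (mem_insert_of_mem hj) (ne_of_mem_of_not_mem hj ha).symm
    rw [sum_insert ha, card_insert_of_notMem ha, add_mul, mul_add, mul_add,
      hsq a (mem_insert_self a s), hS,
      ih (fun i hi => hsq i (mem_insert_of_mem hi))
        (fun i hi j hj => hanti i (mem_insert_of_mem hi) j (mem_insert_of_mem hj))]
    push_cast
    abel

lemma mul_sum_add_sum_mul_of_anticommute {i : ι} (hi : i ∈ s) :
    A i * ∑ j ∈ s, A j + (∑ j ∈ s, A j) * A i = 2 := by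
  have hS : A i * ∑ j ∈ s.erase i, A j = -((∑ j ∈ s.erase i, A j) * A i) :=
    mul_sum_eq_neg_sum_mul fun j hj =>
      hanti i hi j (mem_of_mem_erase hj) (ne_of_mem_erase hj).symm
  rw [← add_sum_erase s A hi, mul_add, add_mul, hsq i hi, hS, ← one_add_one_eq_two]
  abel

variable {𝕜 : Type*} [Field 𝕜] [NeZero (2 : 𝕜)] [Algebra 𝕜 R] (hcard : s.card = 4)
include hcard

lemma half_sum_mul_self_of_anticommute :
    ((2 : 𝕜)⁻¹ • ∑ j ∈ s, A j) * ((2 : 𝕜)⁻¹ • ∑ j ∈ s, A j) = 1 := by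
  have hquarter : (2 : 𝕜)⁻¹ * 2⁻¹ * ((4 : ℕ) : 𝕜) = 1 := by
    have := NeZero.ne (2 : 𝕜)
    push_cast
    field_simp
    norm_num
  rw [smul_mul_smul, sum_mul_self_of_anticommute hsq hanti, hcard,
    ← map_natCast (algebraMap 𝕜 R), Algebra.algebraMap_eq_smul_one, smul_smul, hquarter, one_smul]

lemma half_sum_mul_mul_of_anticommute {i : ι} (hi : i ∈ s) :
    ((2 : 𝕜)⁻¹ • ∑ j ∈ s, A j) * A i * ((2 : 𝕜)⁻¹ • ∑ j ∈ s, A j) =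
      (2 : 𝕜)⁻¹ • ∑ j ∈ s, A j - A i := by
  set S := ∑ j ∈ s, A j
  have h2 := NeZero.ne (2 : 𝕜)
  have hSAS : S * A i * S = (2 : 𝕜) • S - (4 : 𝕜) • A i := by
    rw [eq_sub_of_add_eq' (mul_sum_add_sum_mul_of_anticommute hsq hanti hi), sub_mul, mul_assoc,
      sum_mul_self_of_anticommute hsq hanti, hcard, ← (Nat.cast_commute 4 (A i)).eq,
      ofNat_smul_eq_nsmul (R := 𝕜) 2, ofNat_smul_eq_nsmul (R := 𝕜) 4, nsmul_eq_mul, nsmul_eq_mul]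
    norm_num
  calc ((2 : 𝕜)⁻¹ • S) * A i * ((2 : 𝕜)⁻¹ • S) = ((2 : 𝕜)⁻¹ * 2⁻¹) • (S * A i * S) := by
        rw [smul_mul_assoc, smul_mul_smul_comm]
    _ = (2 : 𝕜)⁻¹ • S - A i := by
        rw [hSAS, smul_sub, smul_smul, smul_smul,
          show (2 : 𝕜)⁻¹ * 2⁻¹ * 2 = 2⁻¹ by field_simp,
          show (2 : 𝕜)⁻¹ * 2⁻¹ * 4 = 1 by field_simp; norm_num, one_smul]

end AnticommutingFamily

section HeisenbergWeyl

variable {m : ℕ}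

lemma neg_one_pow_eq_of_cast_eq {n k : ℕ} (h : (n : ZMod 2) = k) : (-1 : ℂ) ^ n = (-1) ^ k := by
  rw [neg_one_pow_eq_pow_mod_two, (ZMod.natCast_eq_natCast_iff' n k 2).1 h,
    ← neg_one_pow_eq_pow_mod_two]

lemma dotN_cast (a b : V m) : (dotN a b : ZMod 2) = ∑ i, a i * b i := by
  simp [dotN]

lemma dotN_comm (a b : V m) : dotN a b = dotN b a := by
  simp only [dotN, mul_comm]

lemma neg_one_pow_dotN_add_right (b x y : V m) :
    (-1 : ℂ) ^ dotN b (x + y) = (-1) ^ dotN b x * (-1) ^ dotN b y := by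
  rw [← pow_add]
  apply neg_one_pow_eq_of_cast_eq
  push_cast
  simp only [dotN_cast, Pi.add_apply, mul_add, sum_add_distrib]

lemma neg_one_pow_dotN_add_left (x y b : V m) :
    (-1 : ℂ) ^ dotN (x + y) b = (-1) ^ dotN x b * (-1) ^ dotN y b := by
  rw [dotN_comm, dotN_comm x, dotN_comm y, neg_one_pow_dotN_add_right]

lemma V_add_self (a : V m) : a + a = 0 :=
  funext fun i => CharTwo.add_self_eq_zero (a i)

lemma DM_mul (a b a' b' : V m) :
    DM a b * DM a' b' = (-1 : ℂ) ^ dotN b a' • DM (a + a') (b + b') := by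
  ext u v
  rw [Matrix.mul_apply, Finset.sum_eq_single (v + a') (fun w _ hw => by simp [DM, hw])
    (by simp)]
  simp only [DM, Matrix.of_apply, Matrix.smul_apply, smul_eq_mul, if_true, add_assoc,
    add_comm a' a]
  split_ifs
  · rw [neg_one_pow_dotN_add_right, neg_one_pow_dotN_add_left]
    ring
  · simp

lemma DM_zero : DM (0 : V m) 0 = 1 := by
  ext u v
  simp [DM, dotN, Matrix.one_apply]

lemma DM_conjTranspose (a b : V m) : (DM a b)ᴴ = (-1 : ℂ) ^ dotN b a • DM a b := by
  ext u v
  simp only [DM, Matrix.conjTranspose_apply, Matrix.of_apply, Matrix.smul_apply, smul_eq_mul]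
  by_cases huv : u = v + a
  · have hvu : v = u + a := by rw [huv, add_assoc, V_add_self, add_zero]
    rw [if_pos hvu, if_pos huv, huv, neg_one_pow_dotN_add_right]
    simp [mul_comm]
  · have hvu : v ≠ u + a := fun h => huv (by rw [h, add_assoc, V_add_self, add_zero])
    simp [hvu, huv]

lemma I_pow_smul_DM_mem_HW (t : ℕ) (a b : V m) : Complex.I ^ t • DM a b ∈ HW m :=
  ⟨⟨t % 4, Nat.mod_lt _ (by norm_num)⟩, a, b, by rw [Complex.I_pow_eq_pow_mod t]⟩

lemma neg_one_pow_eq_I_pow (n : ℕ) : (-1 : ℂ) ^ n = Complex.I ^ (2 * n) := by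
  rw [pow_mul, Complex.I_sq]

lemma star_I_pow (n : ℕ) : star (Complex.I ^ n) = Complex.I ^ (3 * n) := by
  rw [star_pow, Complex.star_def, Complex.conj_I, pow_mul, Complex.I_pow_three]

lemma HW_mul {M M' : Matrix (V m) (V m) ℂ} (h : M ∈ HW m) (h' : M' ∈ HW m) :
    M * M' ∈ HW m := by
  obtain ⟨k, a, b, rfl⟩ := h
  obtain ⟨k', a', b', rfl⟩ := h'
  rw [smul_mul_smul, DM_mul, smul_smul, ← pow_add, neg_one_pow_eq_I_pow, ← pow_add]
  exact I_pow_smul_DM_mem_HW _ _ _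

lemma HW_conjTranspose {M : Matrix (V m) (V m) ℂ} (h : M ∈ HW m) : Mᴴ ∈ HW m := by
  obtain ⟨k, a, b, rfl⟩ := h
  rw [Matrix.conjTranspose_smul, DM_conjTranspose, smul_smul, star_I_pow, neg_one_pow_eq_I_pow,
    ← pow_add]
  exact I_pow_smul_DM_mem_HW _ _ _

lemma mem_unitaryGroup_of_mem_HW {M : Matrix (V m) (V m) ℂ} (h : M ∈ HW m) :
    M ∈ Matrix.unitaryGroup (V m) ℂ := by
  obtain ⟨k, a, b, rfl⟩ := h
  rw [Matrix.mem_unitaryGroup_iff, Matrix.star_eq_conjTranspose, Matrix.conjTranspose_smul,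
    DM_conjTranspose, smul_smul, smul_mul_smul, DM_mul, V_add_self, V_add_self, DM_zero,
    smul_smul]
  convert one_smul ℂ (1 : Matrix (V m) (V m) ℂ)
  rw [star_pow, Complex.star_def, Complex.conj_I, mul_assoc, mul_assoc, ← pow_add, ← two_mul,
    pow_mul, neg_one_sq, one_pow, mul_one, ← mul_pow]
  simp

lemma EM_mem_HW (c : V m × V m) : EM c ∈ HW m := I_pow_smul_DM_mem_HW _ _ _

lemma EM_mul_self (c : V m × V m) : EM c * EM c = 1 := by
  rw [EM, smul_mul_smul, DM_mul, V_add_self, V_add_self, DM_zero, dotN_comm c.2, ← mul_pow,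
    Complex.I_mul_I, smul_smul, ← mul_pow, neg_one_mul, neg_neg, one_pow, one_smul]

lemma EM_conjTranspose (c : V m × V m) : (EM c)ᴴ = EM c := by
  have h : (EM c)ᴴ * EM c = 1 :=
    Matrix.mem_unitaryGroup_iff'.1 (mem_unitaryGroup_of_mem_HW (EM_mem_HW c))
  rw [← Matrix.mul_one (EM c)ᴴ, ← EM_mul_self c, ← Matrix.mul_assoc, h, Matrix.one_mul]

lemma EM_mul_EM_swap (c c' : V m × V m) :
    EM c * EM c' = (-1 : ℂ) ^ (sympl c c').val • (EM c' * EM c) := by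
  have hsign : (dotN c.2 c'.1 : ZMod 2) = ((sympl c c').val + dotN c'.2 c.1 : ℕ) := by
    push_cast
    rw [dotN_cast, dotN_cast, ZMod.natCast_zmod_val, sympl, ← sum_add_distrib]
    refine sum_congr rfl fun i _ => ?_
    rw [mul_comm (c'.2 i), add_comm (c.1 i * c'.2 i), add_assoc, CharTwo.add_self_eq_zero,
      add_zero]
  rw [EM, EM, smul_mul_smul, smul_mul_smul, DM_mul, DM_mul, smul_smul, smul_smul, smul_smul,
    add_comm c'.1, add_comm c'.2, neg_one_pow_eq_of_cast_eq hsign, pow_add]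
  ring_nf

lemma EM_mul_EM_of_sympl_eq_one {c c' : V m × V m} (h : sympl c c' = 1) :
    EM c * EM c' = -(EM c' * EM c) := by
  rw [EM_mul_EM_swap, h, ZMod.val_one, pow_one, neg_one_smul]

lemma commute_EM_of_sympl_eq_zero {c c' : V m × V m} (h : sympl c c' = 0) :
    Commute (EM c) (EM c') := by
  rw [Commute, SemiconjBy, EM_mul_EM_swap, h, ZMod.val_zero, pow_zero, one_smul]

lemma EM_apply_zero (c : V m × V m) (u : V m) :
    EM c u 0 = if u = c.1 then Complex.I ^ dotN c.1 c.2 else 0 := by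
  simp [EM, DM, dotN]

end HeisenbergWeyl

section CliffordHierarchy

variable {m : ℕ}

lemma notMem_HW_of_apply_ne_zero {M : Matrix (V m) (V m) ℂ} {u u' v : V m} (hne : u ≠ u')
    (h : M u v ≠ 0) (h' : M u' v ≠ 0) : M ∉ HW m := by
  rintro ⟨k, a, b, rfl⟩
  have hu : u = v + a := by
    by_contra hc
    simp [DM, hc] at h
  have hu' : u' = v + a := by
    by_contra hc
    simp [DM, hc] at h'
  exact hne (hu.trans hu'.symm)

lemma CH_subset_unitaryGroup : ∀ k, CH m k ⊆ Matrix.unitaryGroup (V m) ℂ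
  | 0 => fun _ => mem_unitaryGroup_of_mem_HW
  | _ + 1 => fun _ h => h.1

lemma mul_mul_mem_CH {P U P' : Matrix (V m) (V m) ℂ} (hP : P ∈ HW m) (hP' : P' ∈ HW m) :
    ∀ {k}, U ∈ CH m k → P * U * P' ∈ CH m k
  | 0, hU => HW_mul (HW_mul hP hU) hP'
  | k + 1, hU => by
    refine ⟨mul_mem (mul_mem (mem_unitaryGroup_of_mem_HW hP) hU.1)
      (mem_unitaryGroup_of_mem_HW hP'), fun X hX => ?_⟩
    have h : P * U * P' * X * (P * U * P')ᴴ = P * (U * (P' * X * P'ᴴ) * Uᴴ) * Pᴴ := by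
      simp only [Matrix.conjTranspose_mul, Matrix.mul_assoc]
    rw [h]
    exact mul_mul_mem_CH hP (HW_conjTranspose hP)
      (hU.2 _ (HW_mul (HW_mul hP' hX) (HW_conjTranspose hP')))

lemma notMem_CH_of_mul_mul_conjTranspose_eq {W P Q : Matrix (V m) (V m) ℂ} (hW : W ∉ HW m)
    (hP : P ∈ HW m) (hQ : Q ∈ HW m) (h : W * P * Wᴴ = Q * W * Qᴴ) : ∀ k, W ∉ CH m k
  | 0 => hW
  | k + 1 => fun hWk => by
    have hQW : Qᴴ * (Q * W * Qᴴ) * Q ∈ CH m k :=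
      mul_mul_mem_CH (HW_conjTranspose hQ) hQ (h ▸ hWk.2 P hP)
    have hQQ : Qᴴ * Q = 1 := Matrix.mem_unitaryGroup_iff'.1 (mem_unitaryGroup_of_mem_HW hQ)
    rw [← Matrix.mul_assoc, ← Matrix.mul_assoc, hQQ, Matrix.one_mul, Matrix.mul_assoc, hQQ,
      Matrix.mul_one] at hQW
    exact notMem_CH_of_mul_mul_conjTranspose_eq hW hP hQ h k hQW

end CliffordHierarchy

namespace ThreeQubit

/-- `EM (c i)` is the Pauli `E_{i+1}` of the statement. -/
def c : Fin 4 → V 3 × V 3 :=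
  ![(![0, 1, 0], ![0, 1, 0]), (![0, 1, 1], ![0, 0, 1]), (![0, 0, 1], ![1, 1, 1]),
    (![1, 0, 1], ![0, 1, 1])]

def q : V 3 × V 3 := (![1, 1, 0], ![1, 0, 0])

def W : Matrix (V 3) (V 3) ℂ := (2 : ℂ)⁻¹ • ∑ i, EM (c i)

lemma sympl_c_of_ne : ∀ i j, i ≠ j → sympl (c i) (c j) = 1 := by decide

lemma sympl_q_c_zero : sympl q (c 0) = 1 := by decide

lemma sympl_q_c_of_ne_zero : ∀ j, j ≠ 0 → sympl q (c j) = 0 := by decide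

lemma EM_c_anticommute {i j : Fin 4} (hij : i ≠ j) :
    EM (c i) * EM (c j) = -(EM (c j) * EM (c i)) :=
  EM_mul_EM_of_sympl_eq_one (sympl_c_of_ne i j hij)

lemma W_conjTranspose : Wᴴ = W := by
  simp [W, Matrix.conjTranspose_smul, Matrix.conjTranspose_sum, EM_conjTranspose]

lemma W_mul_self : W * W = 1 :=
  half_sum_mul_self_of_anticommute (fun i _ => EM_mul_self (c i))
    (fun _ _ _ _ => EM_c_anticommute) (card_fin 4)

lemma W_mem_unitaryGroup : W ∈ Matrix.unitaryGroup (V 3) ℂ := by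
  rw [Matrix.mem_unitaryGroup_iff, Matrix.star_eq_conjTranspose, W_conjTranspose, W_mul_self]

lemma W_mul_EM_mul_W : W * EM (c 0) * W = EM q * W * EM q := calc
  W * EM (c 0) * W = W - EM (c 0) :=
    half_sum_mul_mul_of_anticommute (fun i _ => EM_mul_self (c i))
      (fun _ _ _ _ => EM_c_anticommute) (card_fin 4) (mem_univ 0)
  _ = EM q * W * EM q := by
    rw [W, Matrix.mul_smul, Matrix.smul_mul,
      mul_sum_mul_eq_sub_of_anticommute (A := fun j => EM (c j)) (EM_mul_self q) (mem_univ 0)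
        (EM_mul_EM_of_sympl_eq_one sympl_q_c_zero)
        (fun j _ hj => commute_EM_of_sympl_eq_zero (sympl_q_c_of_ne_zero j hj)),
      smul_sub, two_mul, ← two_smul ℂ, smul_smul, inv_mul_cancel₀ two_ne_zero, one_smul]

lemma W_apply_fst_zero (j : Fin 4) : W (c j).1 0 = (2 : ℂ)⁻¹ * Complex.I := by
  have hfst : ∀ i j : Fin 4, (c i).1 = (c j).1 → i = j := by decide
  have hdot : ∀ j : Fin 4, dotN (c j).1 (c j).2 = 1 := by decide
  rw [W, Matrix.smul_apply, Matrix.sum_apply,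
    sum_eq_single j (fun i _ hij => by rw [EM_apply_zero, if_neg fun h => hij (hfst _ _ h).symm])
      (by simp),
    EM_apply_zero, if_pos rfl, hdot, pow_one, smul_eq_mul]

lemma W_notMem_HW : W ∉ HW 3 := by
  have h : (2 : ℂ)⁻¹ * Complex.I ≠ 0 := by simp
  exact notMem_HW_of_apply_ne_zero (u := (c 0).1) (u' := (c 1).1) (v := 0) (by decide)
    (by rwa [W_apply_fst_zero]) (by rwa [W_apply_fst_zero])

end ThreeQubit

/-- on `m = 3` qubits, `W = (E(010,010)+E(011,001)+E(001,111)+E(101,011))/2`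
is unitary, is not Clifford, and lies in no level of the Clifford hierarchy; hence the
union of all levels is a proper subset of the unitary group `U(8)`. -/
theorem stmt17 :
    ∀ W : Matrix (V 3) (V 3) ℂ,
      W = (2 : ℂ)⁻¹ • (EM (![0,1,0], ![0,1,0]) + EM (![0,1,1], ![0,0,1]) +
        EM (![0,0,1], ![1,1,1]) + EM (![1,0,1], ![0,1,1])) →
      W ∈ Matrix.unitaryGroup (V 3) ℂ ∧
      ¬ (∀ X ∈ HW 3, W * X * Wᴴ ∈ HW 3) ∧
      (∀ k : ℕ, W ∉ CH 3 k) ∧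
      (⋃ k : ℕ, CH 3 k) ⊂ {U : Matrix (V 3) (V 3) ℂ | U ∈ Matrix.unitaryGroup (V 3) ℂ} := by
  intro W hW
  obtain rfl : W = ThreeQubit.W := by
    rw [hW, ThreeQubit.W, Fin.sum_univ_four]
    rfl
  have hlevels : ∀ k, ThreeQubit.W ∉ CH 3 k :=
    notMem_CH_of_mul_mul_conjTranspose_eq ThreeQubit.W_notMem_HW (EM_mem_HW (ThreeQubit.c 0))
      (EM_mem_HW ThreeQubit.q)
      (by rw [ThreeQubit.W_conjTranspose, EM_conjTranspose, ThreeQubit.W_mul_EM_mul_W])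
  refine ⟨ThreeQubit.W_mem_unitaryGroup, fun h => hlevels 1 ⟨ThreeQubit.W_mem_unitaryGroup, h⟩,
    hlevels, ?_⟩
  exact (Set.ssubset_iff_of_subset (Set.iUnion_subset CH_subset_unitaryGroup)).2
    ⟨_, ThreeQubit.W_mem_unitaryGroup, by simpa using hlevels⟩
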